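/- arXiv:2602.19066 — 3 statements merged into one kernel-verified Lean document; each statement's English description precedes it below -/
import Mathlib

section
/- Let N ≥ 2 and let Q_abs be the absorbing diffusion matrix. Then Q_abs satisfies Q_abs² = −Q_abs, and for every real number c, Matrix.exp (c • Q_abs) = 1 + (1 − exp(−c)) • Q_abs, where 1 denotes the N×N identity matrix. Equivalently, the (i,j) entry of Matrix.exp (c • Q_abs) equals exp(−c) if i = j ≠ m, equals 1 if i = j = m, equals 1 − exp(−c) if i = m and j ≠ m, and equals 0 otherwise. -/
/-!
`-Q_abs` is idempotent. For an idempotent `p` the exponential series collapses, since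
`(t • p) ^ n = tⁿ • p` for `n ≥ 1`: `exp (t • p) = (1 - p) + eᵗ • p`. Taking `p = -Q_abs` and
`t = -c` gives `exp (c • Q_abs) = 1 + (1 - e⁻ᶜ) • Q_abs`.
-/

open Real Matrix

def Qabs (N : ℕ) (m : Fin N) : Matrix (Fin N) (Fin N) ℝ :=
  Matrix.of fun i j =>
    if i = j ∧ i ≠ m then -1
    else if i = m ∧ j ≠ m then 1
    else 0

section IdempotentExp

variable {𝔸 : Type*} [Ring 𝔸] [Algebra ℝ 𝔸] [TopologicalSpace 𝔸] [IsTopologicalRing 𝔸]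
  [ContinuousSMul ℝ 𝔸] {p : 𝔸}

open Nat in
theorem IsIdempotentElem.hasSum_expSeries_smul (hp : IsIdempotentElem p) (t : ℝ) :
    HasSum (fun n : ℕ => (n !⁻¹ : ℝ) • (t • p) ^ n) (1 - p + Real.exp t • p) := by
  have hterm : ∀ n : ℕ, (n !⁻¹ : ℝ) • (t • p) ^ n
      = (if n = 0 then 1 - p else 0) + (t ^ n / n !) • p := by
    rintro (_ | n)
    · simp
    · rw [smul_pow, hp.pow_succ_eq, smul_smul, if_neg n.succ_ne_zero, zero_add, div_eq_inv_mul]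
  simp only [hterm]
  refine (hasSum_ite_eq 0 (1 - p)).add ?_
  rw [Real.exp_eq_exp_ℝ]
  exact (NormedSpace.expSeries_div_hasSum_exp t).smul_const p

theorem IsIdempotentElem.exp_smul [T2Space 𝔸] (hp : IsIdempotentElem p) (t : ℝ) :
    NormedSpace.exp (t • p) = 1 - p + Real.exp t • p := by
  rw [NormedSpace.exp_eq_tsum ℝ]
  exact (hp.hasSum_expSeries_smul t).tsum_eq

end IdempotentExp

section Qabs

variable (N : ℕ)

theorem Qabs_apply_of_ne {m i : Fin N} (hi : i ≠ m) (j : Fin N) :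
    Qabs N m i j = if i = j then -1 else 0 := by
  simp [Qabs, hi]

theorem Qabs_apply_self (m j : Fin N) : Qabs N m m j = if j = m then 0 else 1 := by
  by_cases hj : j = m <;> simp [Qabs, hj]

theorem Qabs_sq (m : Fin N) : Qabs N m ^ 2 = -Qabs N m := by
  ext i j
  rw [sq, mul_apply, neg_apply]
  by_cases hi : i = m
  · subst hi
    rw [Finset.sum_eq_single j]
    · by_cases hj : j = i <;> simp [Qabs_apply_self, Qabs_apply_of_ne, hj]
    · intro k _ hkj
      by_cases hk : k = i <;> simp [Qabs_apply_self, Qabs_apply_of_ne, hk, hkj]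
    · simp
  · simp [Qabs_apply_of_ne N hi]

theorem isIdempotentElem_neg_Qabs (m : Fin N) : IsIdempotentElem (-Qabs N m) := by
  rw [IsIdempotentElem, neg_mul_neg, ← sq, Qabs_sq]

theorem exp_smul_Qabs (m : Fin N) (c : ℝ) :
    NormedSpace.exp (c • Qabs N m) = 1 + (1 - Real.exp (-c)) • Qabs N m := by
  rw [← neg_smul_neg, (isIdempotentElem_neg_Qabs N m).exp_smul]
  module

theorem one_add_smul_Qabs_apply (m : Fin N) (a : ℝ) (i j : Fin N) :
    (1 + a • Qabs N m) i j =
      if i = j then (if i = m then 1 else 1 - a) else if i = m then a else 0 := by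
  rw [Matrix.add_apply, Matrix.smul_apply, one_apply, smul_eq_mul]
  by_cases hi : i = m
  · subst hi
    by_cases hj : j = i
    · simp [Qabs_apply_self, hj]
    · simp [Qabs_apply_self, hj, Ne.symm hj]
  · by_cases hij : i = j
    · subst hij
      simp [Qabs_apply_of_ne N hi, hi, sub_eq_add_neg]
    · simp [Qabs_apply_of_ne N hi, hi, hij]

end Qabs

theorem exp_absorbing_general (N : ℕ) (m : Fin N) :
    Qabs N m ^ 2 = -Qabs N m ∧
    ∀ c : ℝ,
      NormedSpace.exp (c • Qabs N m) = 1 + (1 - Real.exp (-c)) • Qabs N m ∧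
      ∀ i j : Fin N,
        NormedSpace.exp (c • Qabs N m) i j =
          if i = j then (if i = m then 1 else Real.exp (-c))
          else if i = m then 1 - Real.exp (-c)
          else 0 := by
  refine ⟨Qabs_sq N m, fun c => ⟨exp_smul_Qabs N m c, fun i j => ?_⟩⟩
  rw [exp_smul_Qabs, one_add_smul_Qabs_apply, sub_sub_cancel]

/-- `Q_abs² = −Q_abs`, and the matrix exponential of `c • Q_abs` equals
`1 + (1 − exp(−c)) • Q_abs`; entrywise, it equals `exp(−c)` if `i = j ≠ m`, `1` if `i = j = m`,
`1 − exp(−c)` if `i = m ≠ j`, and `0` otherwise. -/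
theorem exp_absorbing (N : ℕ) (hN : 2 ≤ N) (m : Fin N) (hm : (m : ℕ) = N - 1) :
    Qabs N m ^ 2 = -Qabs N m ∧
    ∀ c : ℝ,
      NormedSpace.exp (c • Qabs N m) = 1 + (1 - Real.exp (-c)) • Qabs N m ∧
      ∀ i j : Fin N,
        NormedSpace.exp (c • Qabs N m) i j =
          if i = j then (if i = m then 1 else Real.exp (-c))
          else if i = m then 1 - Real.exp (-c)
          else 0 :=
  exp_absorbing_general N m
end

section
/- Let N ≥ 2, let Q_abs be the absorbing diffusion matrix with mask index m, and let c ∈ ℝ. For every vector x ∈ ℝ^N with ∑_i x_i = 1 and x_m = 0, the m-th component of the vector Matrix.exp (c • Q_abs) *ᵥ x equals 1 − exp(−c). In particular, this value does not depend on x. -/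
open Real Matrix

/-! `Q_abs = R - 1`, where `R = e_m 𝟙ᵀ` sends every state to the mask. Since `𝟙ᵀ e_m = 1`, `R` is
idempotent, so `exp (c • Q_abs) = 1 + (e^{-c} - 1) • (1 - R)`; the mask row of `R *ᵥ x` is `∑ x = 1`. -/

open Nat in
theorem IsIdempotentElem.exp_smul_s3 {A : Type*} [Ring A] [Algebra ℝ A] [TopologicalSpace A]
    [IsTopologicalRing A] [ContinuousSMul ℝ A] [T2Space A] {P : A} (hP : IsIdempotentElem P)
    (t : ℝ) : NormedSpace.exp (t • P) = 1 + (Real.exp t - 1) • P := by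
  have term (n : ℕ) : (n !⁻¹ : ℝ) • (t • P) ^ n
      = (t ^ n / n !) • P + if n = 0 then 1 - P else 0 := by
    cases n with
    | zero => simp
    | succ n => simp [smul_pow, hP.pow_succ_eq, smul_smul, div_eq_inv_mul]
  have hasSum :=
    ((NormedSpace.expSeries_div_hasSum_exp t).smul_const P).add (hasSum_ite_eq 0 (1 - P))
  rw [congrFun (NormedSpace.exp_eq_tsum ℝ) (t • P), tsum_congr term, hasSum.tsum_eq,
    ← Real.exp_eq_exp_ℝ, sub_smul, one_smul]
  abel

theorem Matrix.isIdempotentElem_vecMulVec {n R : Type*} [Fintype n] [CommSemiring R]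
    {u v : n → R} (h : v ⬝ᵥ u = 1) : IsIdempotentElem (vecMulVec u v) := by
  rw [IsIdempotentElem, vecMulVec_mul_vecMulVec, h, one_smul]

theorem Qabs_eq_vecMulVec_sub_one (N : ℕ) (m : Fin N) :
    Qabs N m = vecMulVec (Pi.single m 1) 1 - 1 := by
  ext i j
  by_cases hi : i = m <;> by_cases hj : j = m <;> by_cases hij : i = j <;>
    simp_all [Qabs, one_apply]

theorem mask_probability_independent_general (N : ℕ) (m : Fin N)
    (c : ℝ) (x : Fin N → ℝ) (hsum : ∑ i, x i = 1) (hxm : x m = 0) :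
    (NormedSpace.exp (c • Qabs N m) *ᵥ x) m = 1 - Real.exp (-c) := by
  set R : Matrix (Fin N) (Fin N) ℝ := vecMulVec (Pi.single m 1) 1
  have hR : IsIdempotentElem R := isIdempotentElem_vecMulVec (by simp)
  have hRx : (R *ᵥ x) m = 1 := by rw [vecMulVec_mulVec, one_dotProduct, hsum]; simp
  have hexp : NormedSpace.exp (c • Qabs N m) = 1 + (Real.exp (-c) - 1) • (1 - R) := by
    have hcQ : c • Qabs N m = (-c) • (1 - R) := by
      rw [Qabs_eq_vecMulVec_sub_one, neg_smul, ← smul_neg, neg_sub]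
    rw [hcQ, hR.one_sub.exp_smul_s3]
  rw [hexp, add_mulVec, one_mulVec, smul_mulVec, sub_mulVec, one_mulVec]
  simp only [Pi.add_apply, Pi.smul_apply, Pi.sub_apply, hxm, hRx, smul_eq_mul]
  ring

/-- For every vector `x` with `∑ i, x i = 1` and `x m = 0`, the `m`-th component of
`exp (c • Q_abs) *ᵥ x` equals `1 − exp(−c)`, independently of `x`. -/
theorem mask_probability_independent (N : ℕ) (hN : 2 ≤ N) (m : Fin N) (hm : (m : ℕ) = N - 1)
    (c : ℝ) (x : Fin N → ℝ) (hsum : ∑ i, x i = 1) (hxm : x m = 0) :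
    (NormedSpace.exp (c • Qabs N m) *ᵥ x) m = 1 - Real.exp (-c) :=
  mask_probability_independent_general N m c x hsum hxm
end

section
/- Let V and W be finite types, let p and q be PMFs on V, and let k be a Markov kernel from V to W with k v w > 0 for all v, w. Suppose that the posteriors of p and q coincide: for every w ∈ W and every v ∈ V, p(v)·k v w / (∑_{v'} p(v')·k v' w) = q(v)·k v w / (∑_{v'} q(v')·k v' w). Then p = q. -/
/-!
A single noisy state `w` already suffices: cancelling `k v w > 0` from the two posteriors at `w`
shows that `p` and `q` are proportional, and two proportional vectors that both sum to one are
equal.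
-/

open Finset

/-- A probability mass function on a finite type: nonnegative and summing to 1. -/
def IsPMF {X : Type*} [Fintype X] (p : X → ℝ) : Prop :=
  (∀ x, 0 ≤ p x) ∧ ∑ x, p x = 1

/-- A Markov kernel from `V` to `W`: each `k v` is a PMF on `W`. -/
def IsMarkovKernel {V W : Type*} [Fintype W] (k : V → W → ℝ) : Prop :=
  ∀ v, IsPMF (k v)

theorem IsPMF.exists_pos {X : Type*} [Fintype X] {p : X → ℝ} (hp : IsPMF p) : ∃ x, 0 < p x := by
  by_contra! h
  have : ∑ x, p x ≤ 0 := sum_nonpos fun x _ => h x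
  linarith [hp.2]

theorem IsPMF.sum_mul_pos {X : Type*} [Fintype X] {p f : X → ℝ} (hp : IsPMF p)
    (hf : ∀ x, 0 < f x) : 0 < ∑ x, p x * f x := by
  obtain ⟨x, hx⟩ := hp.exists_pos
  exact sum_pos' (fun y _ => mul_nonneg (hp.1 y) (hf y).le) ⟨x, mem_univ x, mul_pos hx (hf x)⟩

theorem eq_of_sum_eq_one_of_div_eq_div {X : Type*} [Fintype X] {p q : X → ℝ} {a b : ℝ}
    (hp : ∑ x, p x = 1) (hq : ∑ x, q x = 1) (ha : a ≠ 0) (h : ∀ x, p x / a = q x / b) :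
    p = q := by
  have hab : a = b := by
    have hsum : (∑ x, p x) / a = (∑ x, q x) / b := by
      simp only [sum_div, h]
    simpa [hp, hq] using hsum
  subst hab
  funext x
  exact (div_left_inj' ha).mp (h x)

/-- Identifiability through a strictly positive kernel: if two PMFs `p` and `q` induce the
same posteriors under a Markov kernel `k` with `k v w > 0` for all `v, w`, then `p = q`. -/
theorem posterior_identifiability {V W : Type*} [Fintype V] [Fintype W]
    (p q : V → ℝ) (hp : IsPMF p) (hq : IsPMF q)
    (k : V → W → ℝ) (hk : IsMarkovKernel k) (hkpos : ∀ v w, 0 < k v w)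
    (hpost : ∀ w : W, ∀ v : V,
      p v * k v w / (∑ v', p v' * k v' w) = q v * k v w / (∑ v', q v' * k v' w)) :
    p = q := by
  obtain ⟨v₀, -⟩ := hp.exists_pos
  obtain ⟨w, -⟩ := (hk v₀).exists_pos
  refine eq_of_sum_eq_one_of_div_eq_div (b := ∑ v', q v' * k v' w) hp.2 hq.2
    (hp.sum_mul_pos (hkpos · w)).ne' fun v => ?_
  have hvw := hpost w v
  rw [mul_div_right_comm, mul_div_right_comm (q v)] at hvw
  exact mul_right_cancel₀ (hkpos v w).ne' hvw
end
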